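/- Assume for every agent i that f i (s i) 0 = 0 (remaining at the start state with zero control is a rest point of the dynamics). Let (t_f, d, y, v) be a backward-feasible tuple with t_f = max over i of d i, and suppose it minimizes the makespan among backward-feasible tuples: for every backward-feasible tuple (t'_f, d', y', v'), max_i d i ≤ max_i d' i. Define x i t := y i (t_f − t), and u i t := 0 for t < t_f − d i, u i t := v i (t_f − t) for t ≥ t_f − d i. Then (t_f, x, u) is a forward-feasible tuple, and for every forward-feasible tuple (t'_f, x', u') one has t_f ≤ t'_f; consequently, for every constant c > 0, c · t_f ≤ c · t'_f. (When the objective is c times the common arrival time, the padded reversal of a makespan-optimal backward solution is optimal.) -/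

import Mathlib

/-- A forward-feasible tuple: all agents start at `s`, arrive at `g` at the common time `tf`,
respect free spaces, admissible controls and dynamics, and are pairwise collision-free. -/
def IsForwardFeasible {K : ℕ}
    (E : Fin K → Type*) [∀ i, NormedAddCommGroup (E i)] [∀ i, NormedSpace ℝ (E i)]
    (β : Fin K → Type*) [∀ i, Zero (β i)]
    (R : ∀ i, E i → Set (ℝ × ℝ)) (F : ∀ i, Set (E i)) (U : ∀ i, Set (β i))
    (f : ∀ i, E i → β i → E i) (s g : ∀ i, E i)
    (tf : ℝ) (x : ∀ i, ℝ → E i) (u : ∀ i, ℝ → β i) : Prop :=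
  0 < tf ∧
  (∀ i, x i 0 = s i) ∧
  (∀ i, x i tf = g i) ∧
  (∀ i, ∀ t ∈ Set.Icc (0:ℝ) tf, x i t ∈ F i) ∧
  (∀ i, ∀ t ∈ Set.Icc (0:ℝ) tf, u i t ∈ U i) ∧
  (∀ i, ∀ t ∈ Set.Ioo (0:ℝ) tf, HasDerivAt (x i) (f i (x i t) (u i t)) t) ∧
  (∀ t ∈ Set.Icc (0:ℝ) tf, ∀ i j, i ≠ j → R i (x i t) ∩ R j (x j t) = ∅)

/-- A backward-feasible tuple: all agents start at `g`, reach `s` at their individual duration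
`d i` and park there with zero control, respect free spaces, admissible controls and the
time-reversed dynamics, and are pairwise collision-free. -/
def IsBackwardFeasible {K : ℕ}
    (E : Fin K → Type*) [∀ i, NormedAddCommGroup (E i)] [∀ i, NormedSpace ℝ (E i)]
    (β : Fin K → Type*) [∀ i, Zero (β i)]
    (R : ∀ i, E i → Set (ℝ × ℝ)) (F : ∀ i, Set (E i)) (U : ∀ i, Set (β i))
    (f : ∀ i, E i → β i → E i) (s g : ∀ i, E i)
    (tf : ℝ) (d : Fin K → ℝ) (y : ∀ i, ℝ → E i) (v : ∀ i, ℝ → β i) : Prop :=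
  0 < tf ∧
  (∀ i, d i ∈ Set.Ioc (0:ℝ) tf) ∧
  (∀ i, y i 0 = g i) ∧
  (∀ i, ∀ t ∈ Set.Icc (d i) tf, y i t = s i) ∧
  (∀ i, ∀ t ∈ Set.Ioo (d i) tf, v i t = 0) ∧
  (∀ i, ∀ t ∈ Set.Icc (0:ℝ) tf, y i t ∈ F i) ∧
  (∀ i, ∀ t ∈ Set.Icc (0:ℝ) tf, v i t ∈ U i) ∧
  (∀ i, ∀ t ∈ Set.Ioo (0:ℝ) tf, HasDerivAt (y i) (-f i (y i t) (v i t)) t) ∧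
  (∀ t ∈ Set.Icc (0:ℝ) tf, ∀ i j, i ≠ j → R i (y i t) ∩ R j (y j t) = ∅)

/-!
Reversing time maps a forward-feasible tuple arriving at `t'_f` to a backward-feasible one in
which every agent has duration `t'_f`, so `t_f ≤ t'_f` by makespan optimality. Conversely the
reversal of the optimal backward tuple is forward feasible: while an agent waits at `s` before
departing, the padding control `0` agrees with the control it parks with in the backward tuple.
-/

section Reversal

open Set

variable {K : ℕ} {E : Fin K → Type*} [∀ i, NormedAddCommGroup (E i)] [∀ i, NormedSpace ℝ (E i)]
  {β : Fin K → Type*} [∀ i, Zero (β i)]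
  {R : ∀ i, E i → Set (ℝ × ℝ)} {F : ∀ i, Set (E i)} {U : ∀ i, Set (β i)}
  {f : ∀ i, E i → β i → E i} {s g : ∀ i, E i} {tf : ℝ}

theorem IsForwardFeasible.isBackwardFeasible_reverse {x : ∀ i, ℝ → E i} {u : ∀ i, ℝ → β i}
    (h : IsForwardFeasible E β R F U f s g tf x u) :
    IsBackwardFeasible E β R F U f s g tf (fun _ => tf)
      (fun i t => x i (tf - t)) (fun i t => u i (tf - t)) := by
  obtain ⟨htf, hstart, hgoal, hfree, hadm, hderiv, hcoll⟩ := h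
  refine ⟨htf, fun _ => ⟨htf, le_rfl⟩, fun i => by simpa using hgoal i, ?_, ?_,
    fun i t ht => hfree i _ (sub_mem_Icc_zero_iff_right.2 ht),
    fun i t ht => hadm i _ (sub_mem_Icc_zero_iff_right.2 ht), ?_,
    fun t ht => hcoll _ (sub_mem_Icc_zero_iff_right.2 ht)⟩
  · intro i t ht
    simpa [le_antisymm ht.2 ht.1] using hstart i
  · intro i t ht
    exact absurd ht.2 ht.1.not_gt
  · intro i t ht
    simpa using (hderiv i _ (sub_mem_Ioo_zero_iff_right.2 ht)).comp_const_sub tf t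

theorem IsBackwardFeasible.isForwardFeasible_paddedReverse {d : Fin K → ℝ}
    {y : ∀ i, ℝ → E i} {v : ∀ i, ℝ → β i} (hU : ∀ i, (0 : β i) ∈ U i)
    (h : IsBackwardFeasible E β R F U f s g tf d y v) :
    IsForwardFeasible E β R F U f s g tf (fun i t => y i (tf - t))
      (fun i t => if t < tf - d i then (0 : β i) else v i (tf - t)) := by
  obtain ⟨htf, hd, hstart, hpark, hzero, hfree, hadm, hderiv, hcoll⟩ := h
  have hpad_eq : ∀ i, ∀ t ∈ Ioo 0 tf,
      (if t < tf - d i then (0 : β i) else v i (tf - t)) = v i (tf - t) := by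
    intro i t ht
    split_ifs with hwait
    · exact (hzero i _ ⟨by linarith, by linarith [ht.1]⟩).symm
    · rfl
  refine ⟨htf, fun i => by simpa using hpark i tf ⟨(hd i).2, le_rfl⟩,
    fun i => by simpa using hstart i,
    fun i t ht => hfree i _ (sub_mem_Icc_zero_iff_right.2 ht), ?_, ?_,
    fun t ht => hcoll _ (sub_mem_Icc_zero_iff_right.2 ht)⟩
  · intro i t ht
    dsimp only
    split_ifs
    · exact hU i
    · exact hadm i _ (sub_mem_Icc_zero_iff_right.2 ht)
  · intro i t ht
    dsimp only
    rw [hpad_eq i t ht]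
    simpa using (hderiv i _ (sub_mem_Ioo_zero_iff_right.2 ht)).comp_const_sub tf t

end Reversal

theorem padded_reversal_of_makespan_optimal_backward_general
    {K : ℕ} (hK : 1 ≤ K)
    (E : Fin K → Type*) [∀ i, NormedAddCommGroup (E i)] [∀ i, NormedSpace ℝ (E i)]
    (β : Fin K → Type*) [∀ i, Zero (β i)]
    (R : ∀ i, E i → Set (ℝ × ℝ)) (F : ∀ i, Set (E i)) (U : ∀ i, Set (β i))
    (hU : ∀ i, (0 : β i) ∈ U i)
    (f : ∀ i, E i → β i → E i) (s g : ∀ i, E i)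
    (tf : ℝ) (d : Fin K → ℝ) (y : ∀ i, ℝ → E i) (v : ∀ i, ℝ → β i)
    (hback : IsBackwardFeasible E β R F U f s g tf d y v)
    (htf : tf = Finset.univ.sup' (Finset.univ_nonempty_iff.mpr ⟨⟨0, hK⟩⟩) d)
    (hopt : ∀ (tf' : ℝ) (d' : Fin K → ℝ) (y' : ∀ i, ℝ → E i) (v' : ∀ i, ℝ → β i),
      IsBackwardFeasible E β R F U f s g tf' d' y' v' →
      Finset.univ.sup' (Finset.univ_nonempty_iff.mpr ⟨⟨0, hK⟩⟩) d ≤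
        Finset.univ.sup' (Finset.univ_nonempty_iff.mpr ⟨⟨0, hK⟩⟩) d') :
    IsForwardFeasible E β R F U f s g tf
        (fun i t => y i (tf - t))
        (fun i t => if t < tf - d i then (0 : β i) else v i (tf - t)) ∧
    (∀ (tf' : ℝ) (x' : ∀ i, ℝ → E i) (u' : ∀ i, ℝ → β i),
      IsForwardFeasible E β R F U f s g tf' x' u' →
      tf ≤ tf' ∧ ∀ c : ℝ, 0 < c → c * tf ≤ c * tf') := by
  refine ⟨hback.isForwardFeasible_paddedReverse hU, fun tf' x' u' hfwd => ?_⟩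
  have hle : tf ≤ tf' := by
    have := hopt _ _ _ _ hfwd.isBackwardFeasible_reverse
    rwa [Finset.sup'_const, ← htf] at this
  exact ⟨hle, fun c hc => mul_le_mul_of_nonneg_left hle hc.le⟩

/-- The padded reversal of a makespan-optimal backward solution is forward feasible and
minimizes the common arrival time; hence it minimizes `c · t_f` for every `c > 0`. -/
theorem padded_reversal_of_makespan_optimal_backward
    {K : ℕ} (hK : 1 ≤ K)
    (E : Fin K → Type*) [∀ i, NormedAddCommGroup (E i)] [∀ i, NormedSpace ℝ (E i)]
    (β : Fin K → Type*) [∀ i, Zero (β i)]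
    (R : ∀ i, E i → Set (ℝ × ℝ)) (F : ∀ i, Set (E i)) (U : ∀ i, Set (β i))
    (hU : ∀ i, (0 : β i) ∈ U i)
    (f : ∀ i, E i → β i → E i) (s g : ∀ i, E i)
    (hrest : ∀ i, f i (s i) 0 = 0)
    (tf : ℝ) (d : Fin K → ℝ) (y : ∀ i, ℝ → E i) (v : ∀ i, ℝ → β i)
    (hback : IsBackwardFeasible E β R F U f s g tf d y v)
    (htf : tf = Finset.univ.sup' (Finset.univ_nonempty_iff.mpr ⟨⟨0, hK⟩⟩) d)
    (hopt : ∀ (tf' : ℝ) (d' : Fin K → ℝ) (y' : ∀ i, ℝ → E i) (v' : ∀ i, ℝ → β i),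
      IsBackwardFeasible E β R F U f s g tf' d' y' v' →
      Finset.univ.sup' (Finset.univ_nonempty_iff.mpr ⟨⟨0, hK⟩⟩) d ≤
        Finset.univ.sup' (Finset.univ_nonempty_iff.mpr ⟨⟨0, hK⟩⟩) d') :
    IsForwardFeasible E β R F U f s g tf
        (fun i t => y i (tf - t))
        (fun i t => if t < tf - d i then (0 : β i) else v i (tf - t)) ∧
    (∀ (tf' : ℝ) (x' : ∀ i, ℝ → E i) (u' : ∀ i, ℝ → β i),
      IsForwardFeasible E β R F U f s g tf' x' u' →
      tf ≤ tf' ∧ ∀ c : ℝ, 0 < c → c * tf ≤ c * tf') :=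
  padded_reversal_of_makespan_optimal_backward_general hK E β R F U hU f s g tf d y v hback htf hopt
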